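/- arXiv:1510.08592 — 2 statements merged into one kernel-verified Lean document; each statement's English description precedes it below -/
import Mathlib

section
/- Let K, D, λ, m be positive integers with D < K, λ dividing K − D, and K − D dividing K − λ; set r = K − D and q = (K − λ)/(K − D). Consider the index coding problem with mK messages and antidotes A'_k = {k + iK : 1 ≤ i ≤ m−1} ∪ {k + j + iK : 1 ≤ j ≤ D, 0 ≤ i ≤ m−1} ⊆ ZMod (mK) for each k ∈ ZMod (mK). Then the set C^(m) = { Σ_{v=0}^{q−1} e'_{i+vr} + e'_{qr+1+((i−1) mod λ)} : 1 ≤ i ≤ r }, where e'_l = Σ_{t=0}^{m−1} e_{l+tK} ∈ V_{mK}, is a valid scalar linear index code of length r = K − D for this problem, and moreover every valid scalar linear index code for this problem has length at least K − D. -/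
/-- Standard basis vector `e_j` of `V_n = ZMod n → GF(2)`. -/
def stdVec (n : ℕ) (j : ZMod n) : ZMod n → ZMod 2 := fun i => if i = j then 1 else 0

def IsIndexCode (n : ℕ) (A : ZMod n → Set (ZMod n)) (C : Set (ZMod n → ZMod 2)) : Prop :=
  C.Finite ∧ ∀ k : ZMod n,
    stdVec n k ∈ Submodule.span (ZMod 2) (C ∪ (stdVec n '' A k))

/-- `e'_l = Σ_{t=0}^{m-1} e_{l+tK} ∈ V_{mK}`. -/
def eSum (K m : ℕ) (l : ℕ) : ZMod (m * K) → ZMod 2 :=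
  ∑ t ∈ Finset.range m, stdVec (m * K) ((l + t * K : ℕ))

/-- The lift of the one-sided consecutive antidote pattern with parameter `D`:
`A'_k = {k + iK : 1 ≤ i ≤ m-1} ∪ {k + j + iK : 1 ≤ j ≤ D, 0 ≤ i ≤ m-1}`. -/
def consecLiftedA (K D m : ℕ) (k : ZMod (m * K)) : Set (ZMod (m * K)) :=
  {x | ∃ i : ℕ, 1 ≤ i ∧ i ≤ m - 1 ∧ x = k + (i * K : ℕ)} ∪
  {x | ∃ j i : ℕ, 1 ≤ j ∧ j ≤ D ∧ i ≤ m - 1 ∧ x = k + (j + i * K : ℕ)}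

/-!
With `r = K - D` and `q = (K - λ) / r`, so that `K = q r + λ`, receiver `b` of the unlifted
problem on `ZMod K` knows every message outside the window `(b - r, b]`. A receiver
`b = i + v r` with `1 ≤ i ≤ r`, `v < q` decodes from codeword `i`, whose other entries lie
outside its window, unless the tail entry `q r + 1 + (i - 1) % λ` falls inside; then `b = i`,
divisibility forces `i + λ ≤ r`, and codewords `i` and `i + λ` have the same tail, which cancels
in their sum. A receiver `b = q r + i` in the tail uses codeword `i`.

The lifted code is the pullback of this code along `ZMod (m K) → ZMod K`. Pulling back is linear
and sends `e_b` to the sum of `e_x` over the fibre `{x + t K}` of `b`; every member of that fibre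
other than `x`, and the whole fibre of each `b + j`, `1 ≤ j ≤ D`, lies in the lifted antidote.

For optimality, the receivers `D, …, K - 1` form an acyclic set: each knows only messages of
this set with a larger index. Peeling them off from the top shows that the code together with
the `m K - r` remaining unit vectors spans the whole space, so the code has at least `r` words.
-/

open Finset Submodule

theorem stdVec_eq_single {n : ℕ} (j : ZMod n) : stdVec n j = Pi.single j 1 := by
  funext i
  simp [stdVec, Pi.single_apply]

theorem Nat.add_le_of_natCast_eq {n a b : ℕ} (h : (a : ZMod n) = b) (hab : a < b) :
    a + n ≤ b := by
  have hdvd := (Nat.modEq_iff_dvd' hab.le).mp ((ZMod.natCast_eq_natCast_iff _ _ _).mp h)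
  have := Nat.le_of_dvd (by omega) hdvd
  omega

theorem IsIndexCode.card_le_ncard_of_acyclic {n : ℕ} [NeZero n] {A : ZMod n → Set (ZMod n)}
    {C : Set (ZMod n → ZMod 2)} (hC : IsIndexCode n A C) {I : Finset ℕ} {σ : ℕ → ZMod n}
    (hσ : Set.InjOn σ I) (hacyclic : ∀ a ∈ I, ∀ b ∈ I, σ b ∈ A (σ a) → b < a) :
    I.card ≤ C.ncard := by
  set E := stdVec n '' (σ '' I)ᶜ
  have hI : ∀ a ∈ I, stdVec n (σ a) ∈ span (ZMod 2) (C ∪ E) := by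
    intro a
    induction a using Nat.strong_induction_on with
    | _ a ih =>
      intro ha
      refine span_le.mpr ?_ (hC.2 (σ a))
      rintro _ (hc | ⟨y, hy, rfl⟩)
      · exact subset_span (Or.inl hc)
      · by_cases hyI : y ∈ σ '' I
        · obtain ⟨b, hb, rfl⟩ := hyI
          exact ih b (hacyclic a ha b hb hy) hb
        · exact subset_span (Or.inr ⟨y, hyI, rfl⟩)
  have hW : span (ZMod 2) (C ∪ E) = ⊤ := by
    rw [eq_top_iff, ← (Pi.basisFun (ZMod 2) (ZMod n)).span_eq, span_le]
    rintro _ ⟨j, rfl⟩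
    rw [Pi.basisFun_apply, ← stdVec_eq_single]
    by_cases hj : j ∈ σ '' I
    · obtain ⟨a, ha, rfl⟩ := hj
      exact hI a ha
    · exact subset_span (Or.inr ⟨j, hj, rfl⟩)
  have hfin : (C ∪ E).Finite := hC.1.union (Set.toFinite E)
  have hdim : n ≤ (C ∪ E).ncard := by
    have := finrank_span_finset_le_card (R := ZMod 2) hfin.toFinset
    rwa [Set.finrank, hfin.coe_toFinset, hW, finrank_top, Module.finrank_fintype_fun_eq_card,
      ZMod.card, ← Set.ncard_eq_toFinset_card _ hfin] at this
  have hE : E.ncard + I.card ≤ n := by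
    calc E.ncard + I.card ≤ ((σ '' I)ᶜ).ncard + (σ '' I).ncard := by
          rw [hσ.ncard_image, Set.ncard_coe_finset]
          exact Nat.add_le_add_right (Set.ncard_image_le (Set.toFinite _)) _
      _ = n := by rw [Set.ncard_compl_add_ncard, Nat.card_zmod]
  have := Set.ncard_union_le C E
  omega

def reduceMod (K m : ℕ) : ZMod (m * K) →+* ZMod K := ZMod.castHom (dvd_mul_left K m) _

def liftVec (K m : ℕ) : (ZMod K → ZMod 2) →ₗ[ZMod 2] (ZMod (m * K) → ZMod 2) :=
  LinearMap.funLeft (ZMod 2) (ZMod 2) (reduceMod K m)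

def consecA (K D : ℕ) (b : ZMod K) : Set (ZMod K) :=
  {x | ∃ j : ℕ, 1 ≤ j ∧ j ≤ D ∧ x = b + j}

section Lift

variable {K D m : ℕ} [NeZero K]

theorem natCast_mul_inj_of_lt {t t' : ℕ} (ht : t < m) (ht' : t' < m)
    (h : ((t * K : ℕ) : ZMod (m * K)) = ((t' * K : ℕ) : ZMod (m * K))) : t = t' := by
  have hK := Nat.pos_of_neZero K
  have := congrArg ZMod.val h
  rw [ZMod.val_cast_of_lt (Nat.mul_lt_mul_of_pos_right ht hK),
    ZMod.val_cast_of_lt (Nat.mul_lt_mul_of_pos_right ht' hK)] at this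
  exact Nat.eq_of_mul_eq_mul_right hK this

variable [NeZero m]

theorem reduceMod_eq_iff {p x : ZMod (m * K)} :
    reduceMod K m p = reduceMod K m x ↔ ∃ t < m, p = x + ((t * K : ℕ) : ZMod (m * K)) := by
  constructor
  · intro h
    have hK : K ∣ (p - x).val := by
      rw [← ZMod.natCast_eq_zero_iff, ZMod.natCast_val,
        ← ZMod.castHom_apply (h := dvd_mul_left K m)]
      exact (map_sub (reduceMod K m) p x).trans (sub_eq_zero.mpr h)
    obtain ⟨t, ht⟩ := hK
    have hlt : K * t < m * K := ht ▸ ZMod.val_lt (p - x)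
    refine ⟨t, by nlinarith [Nat.pos_of_neZero K], ?_⟩
    rw [mul_comm t K, ← ht, ZMod.natCast_zmod_val, add_sub_cancel]
  · rintro ⟨t, -, rfl⟩
    rw [map_add, map_natCast, Nat.cast_mul, ZMod.natCast_self, mul_zero, add_zero]

theorem liftVec_stdVec (x : ZMod (m * K)) :
    liftVec K m (stdVec K (reduceMod K m x)) =
      ∑ t ∈ range m, stdVec (m * K) (x + ((t * K : ℕ) : ZMod (m * K))) := by
  funext p
  simp only [liftVec, LinearMap.funLeft_apply, stdVec, Finset.sum_apply]
  by_cases hp : ∃ t < m, p = x + ((t * K : ℕ) : ZMod (m * K))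
  · obtain ⟨t₀, ht₀, rfl⟩ := hp
    rw [if_pos (reduceMod_eq_iff.mpr ⟨t₀, ht₀, rfl⟩),
      Finset.sum_eq_single_of_mem t₀ (mem_range.mpr ht₀), if_pos rfl]
    intro t ht hne
    exact if_neg fun h => hne (natCast_mul_inj_of_lt (mem_range.mp ht) ht₀ (add_left_cancel h).symm)
  · rw [if_neg (fun h => hp (reduceMod_eq_iff.mp h))]
    exact (Finset.sum_eq_zero fun t ht => if_neg fun h => hp ⟨t, mem_range.mp ht, h⟩).symm

theorem eSum_eq_liftVec (l : ℕ) : eSum K m l = liftVec K m (stdVec K l) := by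
  rw [← map_natCast (reduceMod K m), liftVec_stdVec, eSum]
  simp only [Nat.cast_add]

theorem IsIndexCode.lift {C : Set (ZMod K → ZMod 2)} (hC : IsIndexCode K (consecA K D) C) :
    IsIndexCode (m * K) (consecLiftedA K D m) (liftVec K m '' C) := by
  refine ⟨hC.1.image _, fun k => ?_⟩
  set T := span (ZMod 2) (liftVec K m '' C ∪ stdVec (m * K) '' consecLiftedA K D m k)
  have hside : ∀ j, 1 ≤ j → j ≤ D → liftVec K m (stdVec K (reduceMod K m k + j)) ∈ T := by
    intro j hj1 hjD
    rw [← map_natCast (reduceMod K m), ← map_add, liftVec_stdVec]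
    refine sum_mem fun t ht => subset_span (Or.inr ⟨_, Or.inr ⟨j, t, hj1, hjD, ?_, ?_⟩, rfl⟩)
    · have := mem_range.mp ht
      omega
    · push_cast
      ring
  have hfiber : liftVec K m (stdVec K (reduceMod K m k)) ∈ T := by
    have := mem_map_of_mem (f := liftVec K m) (hC.2 (reduceMod K m k))
    rw [map_span, Set.image_union] at this
    refine span_le.mpr ?_ this
    rintro _ (⟨c, hc, rfl⟩ | ⟨_, ⟨b, ⟨j, hj1, hjD, rfl⟩, rfl⟩, rfl⟩)
    · exact subset_span (Or.inl ⟨c, hc, rfl⟩)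
    · exact hside j hj1 hjD
  obtain ⟨m', rfl⟩ := Nat.exists_eq_succ_of_ne_zero (NeZero.ne m)
  rw [liftVec_stdVec, sum_range_succ', zero_mul, Nat.cast_zero, add_zero] at hfiber
  refine (T.add_mem_iff_right (sum_mem fun t ht => subset_span (Or.inr ⟨_, Or.inl ?_, rfl⟩))).mp
    hfiber
  exact ⟨t + 1, by omega, by have := mem_range.mp ht; omega, rfl⟩

end Lift

def caseVIWord (K r q lam i : ℕ) : ZMod K → ZMod 2 :=
  ∑ w ∈ range q, stdVec K (i + w * r : ℕ) + stdVec K (q * r + 1 + (i - 1) % lam : ℕ)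

theorem Nat.mul_add_le_mul_of_lt {a b : ℕ} (r : ℕ) (h : a < b) : a * r + r ≤ b * r := by
  simpa [Nat.succ_mul] using Nat.mul_le_mul_right r h

theorem stdVec_natCast_add_self (K t : ℕ) : stdVec K (t + K : ℕ) = stdVec K t := by
  rw [Nat.cast_add, ZMod.natCast_self, add_zero]

section Window

variable {K r q lam : ℕ} {S : Submodule (ZMod 2) (ZMod K → ZMod 2)}

theorem stdVec_mem_of_tail (hK : q * r + lam = K) {i : ℕ} (hi : 1 ≤ i) (hil : i ≤ lam)
    (hside : ∀ t, q * r + i < t → t + r ≤ q * r + i + K → stdVec K t ∈ S)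
    (hword : caseVIWord K r q lam i ∈ S) : stdVec K (q * r + i : ℕ) ∈ S := by
  have hsum : ∑ w ∈ range q, stdVec K (i + w * r : ℕ) ∈ S := sum_mem fun w hw => by
    have := Nat.mul_add_le_mul_of_lt r (mem_range.mp hw)
    rw [← stdVec_natCast_add_self]
    exact hside _ (by omega) (by omega)
  have htail : q * r + 1 + (i - 1) % lam = q * r + i := by
    rw [Nat.mod_eq_of_lt (by omega)]
    omega
  rw [caseVIWord, htail] at hword
  exact (S.add_mem_iff_right hsum).mp hword

theorem stdVec_mem_of_body (hK : q * r + lam = K) {i v : ℕ} (hi : 1 ≤ i) (hir : i ≤ r) (hv : v < q)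
    (hfar : (i - 1) % lam + r + 1 ≤ i + v * r + lam)
    (hside : ∀ t, i + v * r < t → t + r ≤ i + v * r + K → stdVec K t ∈ S)
    (hword : caseVIWord K r q lam i ∈ S) : stdVec K (i + v * r : ℕ) ∈ S := by
  have hvq := Nat.mul_add_le_mul_of_lt r hv
  rw [caseVIWord, ← add_sum_erase _ _ (mem_range.mpr hv), add_assoc] at hword
  refine (S.add_mem_iff_left (add_mem (sum_mem fun w hw => ?_) (hside _ (by omega) (by omega)))).mp
    hword
  obtain ⟨hwv, hwq⟩ := mem_erase.mp hw
  have hwq := Nat.mul_add_le_mul_of_lt r (mem_range.mp hwq)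
  rcases Nat.lt_or_gt_of_ne hwv with hwv | hvw
  · have := Nat.mul_add_le_mul_of_lt r hwv
    rw [← stdVec_natCast_add_self]
    exact hside _ (by omega) (by omega)
  · have := Nat.mul_add_le_mul_of_lt r hvw
    exact hside _ (by omega) (by omega)

theorem stdVec_mem_of_body_pair (hK : q * r + lam = K) (hq : 0 < q) (hlam : 0 < lam)
    (hdvd : lam ∣ r) {i : ℕ} (hi : 1 ≤ i) (hnear : i + lam < (i - 1) % lam + r + 1)
    (hside : ∀ t, i < t → t + r ≤ i + K → stdVec K t ∈ S)
    (hword : ∀ i', 1 ≤ i' → i' ≤ r → caseVIWord K r q lam i' ∈ S) : stdVec K i ∈ S := by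
  have hdiv := Nat.div_add_mod (i - 1) lam
  have hmod := Nat.mod_lt (i - 1) hlam
  -- `lam` divides both `r` and `lam * ((i - 1) / lam + 1)`, and the latter is smaller
  have hir : i + lam ≤ r := by
    have hdvd' : lam ∣ r - lam * ((i - 1) / lam + 1) := Nat.dvd_sub hdvd (dvd_mul_right _ _)
    have := Nat.le_of_dvd (by rw [mul_add_one]; omega) hdvd'
    rw [mul_add_one] at this
    omega
  have htail : (i + lam - 1) % lam = (i - 1) % lam := by
    rw [show i + lam - 1 = i - 1 + lam by omega, Nat.add_mod_right]
  have hpair := add_mem (hword i hi (by omega)) (hword (i + lam) (by omega) hir)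
  rw [caseVIWord, caseVIWord, htail, add_add_add_comm, CharTwo.add_self_eq_zero, add_zero,
    ← add_sum_erase _ _ (mem_range.mpr hq), zero_mul, add_zero, add_assoc] at hpair
  refine (S.add_mem_iff_left (add_mem (sum_mem fun w hw => ?_) (sum_mem fun w hw => ?_))).mp hpair
  · obtain ⟨hw0, hwq⟩ := mem_erase.mp hw
    have := Nat.mul_add_le_mul_of_lt r (mem_range.mp hwq)
    have := Nat.mul_add_le_mul_of_lt r (Nat.pos_of_ne_zero hw0)
    exact hside _ (by omega) (by omega)
  · have := Nat.mul_add_le_mul_of_lt r (mem_range.mp hw)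
    exact hside _ (by omega) (by omega)

theorem stdVec_mem_of_window (hK : q * r + lam = K) (hr : 0 < r) (hdvd : lam ∣ r) {b : ℕ}
    (hb : 1 ≤ b) (hbK : b ≤ K) (hside : ∀ t, b < t → t + r ≤ b + K → stdVec K t ∈ S)
    (hword : ∀ i, 1 ≤ i → i ≤ r → caseVIWord K r q lam i ∈ S) : stdVec K b ∈ S := by
  have hlam := Nat.pos_of_dvd_of_pos hdvd hr
  have hlr := Nat.le_of_dvd hr hdvd
  rcases le_or_gt b (q * r) with hbody | htail
  · obtain ⟨i, v, hi, hir, rfl⟩ : ∃ i v, 1 ≤ i ∧ i ≤ r ∧ b = i + v * r :=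
      ⟨(b - 1) % r + 1, (b - 1) / r, by omega, Nat.mod_lt _ hr,
        by have := Nat.mod_add_div (b - 1) r; rw [mul_comm] at this; omega⟩
    have hv : v < q := by
      by_contra! hqv
      have := Nat.mul_le_mul_right r hqv
      omega
    by_cases hfar : (i - 1) % lam + r + 1 ≤ i + v * r + lam
    · exact stdVec_mem_of_body hK hi hir hv hfar hside (hword i hi hir)
    · obtain rfl : v = 0 := by
        by_contra hv0
        have := Nat.mul_add_le_mul_of_lt r (Nat.pos_of_ne_zero hv0)
        have := Nat.mod_lt (i - 1) hlam
        omega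
      simp only [zero_mul, add_zero] at hside hfar ⊢
      exact stdVec_mem_of_body_pair hK hv hlam hdvd hi (by omega) hside hword
  · obtain ⟨i, rfl⟩ : ∃ i, b = q * r + i := ⟨b - q * r, by omega⟩
    exact stdVec_mem_of_tail hK (by omega) (by omega) hside (hword i (by omega) (by omega))

end Window

theorem isIndexCode_caseVI {K D r q lam : ℕ} (hK : q * r + lam = K) (hD : D + r = K) (hr : 0 < r)
    (hdvd : lam ∣ r) : IsIndexCode K (consecA K D) (caseVIWord K r q lam '' Set.Icc 1 r) := by
  refine ⟨(Set.finite_Icc 1 r).image _, fun b => ?_⟩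
  have : NeZero K := ⟨by omega⟩
  have hb : (((b - 1).val + 1 : ℕ) : ZMod K) = b := by
    rw [Nat.cast_add, ZMod.natCast_zmod_val, Nat.cast_one, sub_add_cancel]
  rw [← hb]
  refine stdVec_mem_of_window hK hr hdvd (by omega) (ZMod.val_lt (b - 1)) (fun t hbt htK => ?_)
    (fun i hi hir => subset_span (Or.inl ⟨i, ⟨hi, hir⟩, rfl⟩))
  refine subset_span (Or.inr ⟨t, ⟨t - ((b - 1).val + 1), by omega, by omega, ?_⟩, rfl⟩)
  rw [← Nat.cast_add, Nat.add_sub_cancel' hbt.le]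

theorem IsIndexCode.sub_le_ncard {K D m : ℕ} [NeZero K] [NeZero m]
    {C : Set (ZMod (m * K) → ZMod 2)} (hC : IsIndexCode (m * K) (consecLiftedA K D m) C) :
    K - D ≤ C.ncard := by
  have hK := Nat.pos_of_neZero K
  have hKm : K ≤ m * K := Nat.le_mul_of_pos_left K (Nat.pos_of_neZero m)
  have hσ : Set.InjOn (fun a : ℕ => ((K - 1 - a : ℕ) : ZMod (m * K))) (range (K - D)) := by
    intro a ha b hb hab
    have := congrArg ZMod.val hab
    simp only [coe_range, Set.mem_Iio] at this ha hb
    rw [ZMod.val_cast_of_lt (by omega), ZMod.val_cast_of_lt (by omega)] at this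
    omega
  have hacyclic : ∀ a ∈ range (K - D), ∀ b ∈ range (K - D),
      ((K - 1 - b : ℕ) : ZMod (m * K)) ∈ consecLiftedA K D m ((K - 1 - a : ℕ)) → b < a := by
    intro a ha b hb hmem
    rw [mem_range] at ha hb
    by_contra! hab
    have hiK : ∀ i, i ≤ m - 1 → i * K + K ≤ m * K := fun i hi => by
      have := Nat.mul_le_mul_right K hi
      rw [Nat.sub_one_mul] at this
      omega
    rcases hmem with ⟨i, hi, him, h⟩ | ⟨j, i, hj, hjD, him, h⟩ <;> rw [← Nat.cast_add] at h
    · have := Nat.le_mul_of_pos_left K hi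
      have := Nat.add_le_of_natCast_eq h (by omega)
      have := hiK i him
      omega
    · have := Nat.add_le_of_natCast_eq h (by omega)
      have := hiK i him
      omega
  simpa using hC.card_le_ncard_of_acyclic hσ hacyclic

theorem liftVec_caseVIWord {K m : ℕ} [NeZero K] [NeZero m] (r q lam i : ℕ) :
    liftVec K m (caseVIWord K r q lam i) =
      (∑ w ∈ range q, eSum K m (i + w * r)) + eSum K m (q * r + 1 + (i - 1) % lam) := by
  simp only [caseVIWord, map_add, map_sum, eSum_eq_liftVec]

theorem lifted_code_caseVI_general (K D lam m : ℕ) (hm : 0 < m) (hDK : D < K) (hdvd1 : lam ∣ (K - D))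
    (hdvd2 : (K - D) ∣ (K - lam)) :
    (IsIndexCode (m * K) (consecLiftedA K D m)
        {v | ∃ i : ℕ, 1 ≤ i ∧ i ≤ K - D ∧
          v = (∑ w ∈ Finset.range ((K - lam) / (K - D)), eSum K m (i + w * (K - D))) +
            eSum K m (((K - lam) / (K - D)) * (K - D) + 1 + ((i - 1) % lam))} ∧
      ({v | ∃ i : ℕ, 1 ≤ i ∧ i ≤ K - D ∧
          v = (∑ w ∈ Finset.range ((K - lam) / (K - D)), eSum K m (i + w * (K - D))) +
            eSum K m (((K - lam) / (K - D)) * (K - D) + 1 + ((i - 1) % lam))} :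
        Set (ZMod (m * K) → ZMod 2)).ncard = K - D) ∧
    (∀ C' : Set (ZMod (m * K) → ZMod 2),
      IsIndexCode (m * K) (consecLiftedA K D m) C' → K - D ≤ C'.ncard) := by
  have : NeZero K := ⟨by omega⟩
  have : NeZero m := ⟨hm.ne'⟩
  set r := K - D
  set q := (K - lam) / r
  have hr : 0 < r := by omega
  have hlr : lam ≤ r := Nat.le_of_dvd hr hdvd1
  have hbase := isIndexCode_caseVI (q := q) (by rw [Nat.div_mul_cancel hdvd2]; omega)
    (show D + r = K by omega) hr hdvd1
  have hcode : {v | ∃ i : ℕ, 1 ≤ i ∧ i ≤ r ∧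
      v = (∑ w ∈ range q, eSum K m (i + w * r)) + eSum K m (q * r + 1 + ((i - 1) % lam))} =
      liftVec K m '' (caseVIWord K r q lam '' Set.Icc 1 r) := by
    ext v
    simp [liftVec_caseVIWord, eq_comm, and_assoc]
  rw [hcode]
  refine ⟨⟨hbase.lift, le_antisymm ?_ hbase.lift.sub_le_ncard⟩, fun C' hC' => hC'.sub_le_ncard⟩
  calc _ ≤ (caseVIWord K r q lam '' Set.Icc 1 r).ncard := Set.ncard_image_le hbase.1
    _ ≤ (Set.Icc 1 r).ncard := Set.ncard_image_le (Set.finite_Icc 1 r)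
    _ = r := by simp

/-- **Corollary 2 (lift of Case VI).** If `λ ∣ K - D` and `K - D ∣ K - λ`, with
`r = K - D` and `q = (K - λ)/(K - D)`, the lifted code
`{Σ_{v=0}^{q-1} e'_{i+vr} + e'_{qr+1+((i-1) mod λ)} : 1 ≤ i ≤ r}` is a valid scalar
linear index code of optimal length `K - D` for the lifted consecutive-antidote
problem on `m*K` messages. -/
theorem lifted_code_caseVI (K D lam m : ℕ) (hK : 0 < K) (hD : 0 < D) (hlam : 0 < lam)
    (hm : 0 < m) (hDK : D < K) (hdvd1 : lam ∣ (K - D)) (hdvd2 : (K - D) ∣ (K - lam)) :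
    (IsIndexCode (m * K) (consecLiftedA K D m)
        {v | ∃ i : ℕ, 1 ≤ i ∧ i ≤ K - D ∧
          v = (∑ w ∈ Finset.range ((K - lam) / (K - D)), eSum K m (i + w * (K - D))) +
            eSum K m (((K - lam) / (K - D)) * (K - D) + 1 + ((i - 1) % lam))} ∧
      ({v | ∃ i : ℕ, 1 ≤ i ∧ i ≤ K - D ∧
          v = (∑ w ∈ Finset.range ((K - lam) / (K - D)), eSum K m (i + w * (K - D))) +
            eSum K m (((K - lam) / (K - D)) * (K - D) + 1 + ((i - 1) % lam))} :
        Set (ZMod (m * K) → ZMod 2)).ncard = K - D) ∧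
    (∀ C' : Set (ZMod (m * K) → ZMod 2),
      IsIndexCode (m * K) (consecLiftedA K D m) C' → K - D ≤ C'.ncard) :=
  lifted_code_caseVI_general K D lam m hm hDK hdvd1 hdvd2
end

section
/- Let K, D, λ, m be positive integers with D < K, λ dividing K − D, K − D dividing K + λ, q := (K + λ)/(K − D) ≥ 2, and s := (K − D)/λ ≥ 2; set r = K − D and p = K − D − λ. Consider the index coding problem with mK messages and antidotes A'_k = {k + iK : 1 ≤ i ≤ m−1} ∪ {k + j + iK : 1 ≤ j ≤ D, 0 ≤ i ≤ m−1} ⊆ ZMod (mK) for each k ∈ ZMod (mK). Then the set C^(m) consisting of the vectors Σ_{v=0}^{q−1} e'_{k+vr} + Σ_{u=1}^{s−2} e'_{k+(q−1)r+uλ} for 1 ≤ k ≤ λ, the vectors Σ_{v=0}^{q−2} e'_{k+vr} + e'_{k+(q−1)r−λ} for λ+1 ≤ k ≤ p, and the vectors Σ_{v=0}^{q−2} e'_{k+vr} + Σ_{u=1}^{s−1} e'_{k+(q−2)r+uλ} for p+1 ≤ k ≤ r, where e'_l = Σ_{t=0}^{m−1} e_{l+tK} ∈ V_{mK}, is a valid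 scalar linear index code of length r = K − D for this problem, and moreover every valid scalar linear index code for this problem has length at least K − D. -/
/-- The lifted code of Corollary 3 (lift of Case X), with `r = K - D`,
`p = K - D - λ`, `q = (K + λ)/(K - D)` and `s = (K - D)/λ`. -/
def codeCaseX (K D lam m : ℕ) : Set (ZMod (m * K) → ZMod 2) :=
  {v | ∃ k : ℕ, 1 ≤ k ∧ k ≤ lam ∧
    v = (∑ w ∈ Finset.range ((K + lam) / (K - D)), eSum K m (k + w * (K - D))) +
      ∑ u ∈ Finset.Icc 1 ((K - D) / lam - 2),
        eSum K m (k + ((K + lam) / (K - D) - 1) * (K - D) + u * lam)} ∪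
  {v | ∃ k : ℕ, lam + 1 ≤ k ∧ k ≤ K - D - lam ∧
    v = (∑ w ∈ Finset.range ((K + lam) / (K - D) - 1), eSum K m (k + w * (K - D))) +
      eSum K m (k + ((K + lam) / (K - D) - 1) * (K - D) - lam)} ∪
  {v | ∃ k : ℕ, K - D - lam + 1 ≤ k ∧ k ≤ K - D ∧
    v = (∑ w ∈ Finset.range ((K + lam) / (K - D) - 1), eSum K m (k + w * (K - D))) +
      ∑ u ∈ Finset.Icc 1 ((K - D) / lam - 1),
        eSum K m (k + ((K + lam) / (K - D) - 2) * (K - D) + u * lam)}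

/-! The vectors `e'_l` depend only on `l mod K`, and receiver `k` of the lifted problem knows
`e'_{k+1}, …, e'_{k+D}` and the other copies `e_{k+iK}` of its own message. So it suffices that,
for every `K`-periodic `f`, receiver `x ∈ [1, K]` of the cyclic base problem recovers `f x`; its
unknown positions form the window of length `r` ending at `x`. For most `x` a single code vector
meets this window only in `x`. The exceptions are `x ≤ λ`, where the tails of `A_x` and `C_{x+p}`
cancel, and `x = e + (q-1)r + dλ` with `λ < e + dλ ≤ p`, where `A_e - Σ_{j<d} B_{e+(j+1)λ}`
telescopes to such a vector.

For the lower bound, receivers `0, …, r-1` know only messages of larger index among themselves;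
projecting onto these `r` coordinates, the code must then span all of `GF(2)^r`. -/

open Finset

theorem sum_Icc_one_eq_sum_range {M : Type*} [AddCommMonoid M] (g : ℕ → M) (n : ℕ) :
    ∑ u ∈ Icc 1 n, g u = ∑ u ∈ range n, g (u + 1) := by
  rw [← Ico_add_one_right_eq_Icc, sum_Ico_eq_sum_range]
  simp [add_comm]

section CodeVectors

/- `A_k`, `B_k`, `C_k`: the paper's code vectors for `1 ≤ k ≤ λ`, `λ < k ≤ p` and `p < k ≤ r`,
with `e'_l` replaced by `f l`; `codeCaseX` uses `f = eSum K m`. -/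

variable {V : Type*} [AddCommGroup V] (f : ℕ → V) (q s r lam : ℕ)

def caseXVecA (k : ℕ) : V :=
  ∑ w ∈ range q, f (k + w * r) + ∑ u ∈ Icc 1 (s - 2), f (k + (q - 1) * r + u * lam)

def caseXVecB (k : ℕ) : V :=
  ∑ w ∈ range (q - 1), f (k + w * r) + f (k + (q - 1) * r - lam)

def caseXVecC (k : ℕ) : V :=
  ∑ w ∈ range (q - 1), f (k + w * r) + ∑ u ∈ Icc 1 (s - 1), f (k + (q - 2) * r + u * lam)

variable {Q S : ℕ} (k : ℕ)

theorem caseXVecA_eq : caseXVecA f (Q + 2) (S + 2) r lam k =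
    ∑ w ∈ range (Q + 1), f (k + w * r) + ∑ u ∈ range (S + 1), f (k + (Q + 1) * r + u * lam) := by
  simp only [caseXVecA, Nat.add_sub_cancel, sum_Icc_one_eq_sum_range, sum_range_succ _ (Q + 1),
    sum_range_succ' _ S]
  simp only [zero_mul, add_zero]
  abel

theorem caseXVecC_eq : caseXVecC f (Q + 2) (S + 2) r lam k =
    ∑ w ∈ range (Q + 1), f (k + w * r) + ∑ u ∈ range (S + 1), f (k + Q * r + (u + 1) * lam) := by
  simp only [caseXVecC, Nat.add_sub_cancel, sum_Icc_one_eq_sum_range]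
  rfl

end CodeVectors

theorem exists_eq_add_mul {x c : ℕ} (hc : 0 < c) (hx : 1 ≤ x) :
    ∃ b w, 1 ≤ b ∧ b ≤ c ∧ x = b + w * c :=
  ⟨(x - 1) % c + 1, (x - 1) / c, by omega, Nat.mod_lt _ hc,
    by have := Nat.mod_add_div' (x - 1) c; omega⟩

section Decoding

/- Receiver `x ∈ [1, K]` of the base problem knows `f y` for `x < y ≤ x + D` and, since `f` is
`K`-periodic and `K = D + r`, for `1 ≤ y ≤ x - r`: these are the hypotheses `habove`, `hbelow`. -/

variable {V : Type*} [AddCommGroup V] {M : AddSubgroup V} {f : ℕ → V} {D r x Q S lam : ℕ}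

theorem sum_above_mem (habove : ∀ y, x < y → y ≤ x + D → f y ∈ M) {c n : ℕ} (hc : 0 < c)
    (hn : n * c ≤ D) : ∑ i ∈ range n, f (x + (i + 1) * c) ∈ M :=
  M.sum_mem fun i hi => by
    have : (i + 1) * c ≤ n * c := Nat.mul_le_mul_right c (mem_range.mp hi)
    exact habove _ (by nlinarith) (by omega)

theorem sum_below_mem (hbelow : ∀ y, 1 ≤ y → y + r ≤ x → f y ∈ M) {b n : ℕ} (hb : 1 ≤ b)
    (hx : b + n * r ≤ x) : ∑ w ∈ range n, f (b + w * r) ∈ M :=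
  M.sum_mem fun w hw => by
    have : (w + 1) * r ≤ n * r := Nat.mul_le_mul_right r (mem_range.mp hw)
    exact hbelow _ (by omega) (by nlinarith)

theorem mem_of_sum_from_add_mem (habove : ∀ y, x < y → y ≤ x + D → f y ∈ M) {c n : ℕ} {t : V}
    (hc : 0 < c) (hn : n * c ≤ D) (hv : ∑ i ∈ range (n + 1), f (x + i * c) + t ∈ M)
    (ht : t ∈ M) : f x ∈ M := by
  rw [sum_range_succ', zero_mul, add_zero, add_comm _ (f x), add_assoc] at hv
  exact (M.add_mem_cancel_right (M.add_mem (sum_above_mem habove hc hn) ht)).mp hv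

theorem mem_of_sum_through_add_mem (hbelow : ∀ y, 1 ≤ y → y + r ≤ x → f y ∈ M)
    (habove : ∀ y, x < y → y ≤ x + D → f y ∈ M) {b w₀ n : ℕ} {t : V} (hr : 0 < r) (hb : 1 ≤ b)
    (hx : b + w₀ * r = x) (hn : n * r ≤ D)
    (hv : ∑ w ∈ range (w₀ + (n + 1)), f (b + w * r) + t ∈ M) (ht : t ∈ M) : f x ∈ M := by
  have hshift : ∀ i, b + (w₀ + i) * r = x + i * r := fun i => by rw [← hx]; ring
  rw [sum_range_add, add_comm (∑ w ∈ range w₀, _), add_assoc] at hv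
  simp only [hshift] at hv
  exact mem_of_sum_from_add_mem habove hr hn hv (M.add_mem (sum_below_mem hbelow hb hx.le) ht)

theorem mem_of_caseXVecA_of_caseXVecC (habove : ∀ y, x < y → y ≤ x + D → f y ∈ M) {p : ℕ}
    (hp : 0 < p) (hr : p + lam = r) (hD : Q * r + p = D)
    (hA : caseXVecA f (Q + 2) (S + 2) r lam x ∈ M)
    (hC : caseXVecC f (Q + 2) (S + 2) r lam (x + p) ∈ M) : f x ∈ M := by
  have htail : ∀ u, x + p + Q * r + (u + 1) * lam = x + (Q + 1) * r + u * lam := fun u => by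
    rw [← hr]; ring
  have hdiff : caseXVecA f (Q + 2) (S + 2) r lam x - caseXVecC f (Q + 2) (S + 2) r lam (x + p) =
      ∑ w ∈ range (Q + 1), f (x + w * r) + -∑ w ∈ range (Q + 1), f (x + p + w * r) := by
    rw [caseXVecA_eq, caseXVecC_eq]
    simp only [htail]
    abel
  refine mem_of_sum_from_add_mem habove (by omega) (by omega : Q * r ≤ D)
    (hdiff ▸ M.sub_mem hA hC) (M.neg_mem (M.sum_mem fun w hw => habove _ (by omega) ?_))
  have : w * r ≤ Q * r := Nat.mul_le_mul_right r (Nat.lt_succ_iff.mp (mem_range.mp hw))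
  omega

theorem caseXVecA_sub_sum_caseXVecB (e d : ℕ) (hd : d ≤ S) :
    caseXVecA f (Q + 2) (S + 2) r lam e -
        ∑ j ∈ range d, caseXVecB f (Q + 2) r lam (e + (j + 1) * lam) =
      ∑ i ∈ range (S - d + 1), f (e + (Q + 1) * r + d * lam + i * lam) +
        (∑ w ∈ range (Q + 1), f (e + w * r) -
          ∑ j ∈ range d, ∑ w ∈ range (Q + 1), f (e + (j + 1) * lam + w * r)) := by
  have hB : ∀ j, caseXVecB f (Q + 2) r lam (e + (j + 1) * lam) =
      ∑ w ∈ range (Q + 1), f (e + (j + 1) * lam + w * r) + f (e + (Q + 1) * r + j * lam) := by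
    intro j
    simp only [caseXVecB, show Q + 2 - 1 = Q + 1 from rfl]
    congr 2
    have : (j + 1) * lam = j * lam + lam := by ring
    omega
  have htail : ∑ u ∈ range (S + 1), f (e + (Q + 1) * r + u * lam) =
      ∑ j ∈ range d, f (e + (Q + 1) * r + j * lam) +
        ∑ i ∈ range (S - d + 1), f (e + (Q + 1) * r + d * lam + i * lam) := by
    rw [show S + 1 = d + (S - d + 1) by omega, sum_range_add]
    simp only [add_mul, add_assoc]
  simp only [caseXVecA_eq, hB, sum_add_distrib, htail]
  abel

theorem mem_of_caseXVecA_of_caseXVecB (hbelow : ∀ y, 1 ≤ y → y + r ≤ x → f y ∈ M)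
    (habove : ∀ y, x < y → y ≤ x + D → f y ∈ M) (hlam : 0 < lam) (hSD : S * lam ≤ D) {b : ℕ}
    (hb : lam < b) (hbS : b ≤ (S + 1) * lam) (hx : b + (Q + 1) * r = x)
    (hA : ∀ k, 1 ≤ k → k ≤ lam → caseXVecA f (Q + 2) (S + 2) r lam k ∈ M)
    (hB : ∀ k, lam + 1 ≤ k → k ≤ (S + 1) * lam → caseXVecB f (Q + 2) r lam k ∈ M) :
    f x ∈ M := by
  obtain ⟨e, d, he1, hel, rfl⟩ := exists_eq_add_mul hlam (by omega : 1 ≤ b)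
  have hdS : d ≤ S := by
    by_contra h
    have : (S + 1) * lam ≤ d * lam := Nat.mul_le_mul_right lam (by omega)
    omega
  have hBd : ∀ j < d, (j + 1) * lam ≤ d * lam := fun j hj => Nat.mul_le_mul_right lam hj
  have hcomb := M.sub_mem (hA e he1 hel) (M.sum_mem fun j hj => hB (e + (j + 1) * lam)
    (by have := Nat.le_mul_of_pos_left lam (by omega : 0 < j + 1); omega)
    (by have := hBd j (mem_range.mp hj); omega))
  rw [caseXVecA_sub_sum_caseXVecB e d hdS, show e + (Q + 1) * r + d * lam = x by omega] at hcomb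
  refine mem_of_sum_from_add_mem habove hlam
    ((Nat.mul_le_mul_right lam (Nat.sub_le S d)).trans hSD) hcomb
    (M.sub_mem (sum_below_mem hbelow he1 (by omega))
      (M.sum_mem fun j hj => sum_below_mem hbelow (by omega) ?_))
  have := hBd j (mem_range.mp hj)
  omega

theorem mem_of_caseXVecA (hbelow : ∀ y, 1 ≤ y → y + r ≤ x → f y ∈ M)
    (habove : ∀ y, x < y → y ≤ x + D → f y ∈ M) (hlam : 0 < lam) (hr : (S + 2) * lam = r)
    (hD : Q * r + (S + 1) * lam = D) {b w₀ : ℕ} (hb : 1 ≤ b) (hw₀ : 1 ≤ w₀) (hw₀Q : w₀ ≤ Q + 1)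
    (hx : b + w₀ * r = x) (hA : caseXVecA f (Q + 2) (S + 2) r lam b ∈ M) : f x ∈ M := by
  rw [caseXVecA, show Q + 2 - 1 = Q + 1 from rfl, show S + 2 - 2 = S from rfl,
    show Q + 2 = w₀ + (Q + 1 - w₀ + 1) by omega] at hA
  have hrw : (Q + 1 - w₀) * r ≤ Q * r := Nat.mul_le_mul_right r (by omega)
  have hr0 : 0 < r := by nlinarith
  refine mem_of_sum_through_add_mem hbelow habove hr0 hb hx (by omega) hA
    (M.sum_mem fun u hu => ?_)
  obtain ⟨hu1, huS⟩ := mem_Icc.mp hu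
  have h1 : w₀ * r ≤ (Q + 1) * r := Nat.mul_le_mul_right r hw₀Q
  have h2 : (Q + 1) * r ≤ w₀ * r + Q * r := by nlinarith
  have h3 : u * lam ≤ (S + 1) * lam := Nat.mul_le_mul_right lam (by omega)
  have h4 : lam ≤ u * lam := Nat.le_mul_of_pos_left lam hu1
  exact habove _ (by omega) (by omega)

theorem mem_of_caseXVecB (hbelow : ∀ y, 1 ≤ y → y + r ≤ x → f y ∈ M)
    (habove : ∀ y, x < y → y ≤ x + D → f y ∈ M) (hlam : 0 < lam) (hr : (S + 2) * lam = r)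
    (hD : Q * r + (S + 1) * lam = D) {b w₀ : ℕ} (hb : 1 ≤ b) (hw₀Q : w₀ ≤ Q)
    (hx : b + w₀ * r = x) (hB : caseXVecB f (Q + 2) r lam b ∈ M) : f x ∈ M := by
  rw [caseXVecB, show Q + 2 - 1 = Q + 1 from rfl,
    show range (Q + 1) = range (w₀ + (Q - w₀ + 1)) by congr 1; omega] at hB
  have hrw : (Q - w₀) * r ≤ Q * r := Nat.mul_le_mul_right r (Nat.sub_le Q w₀)
  have hr0 : 0 < r := by nlinarith
  refine mem_of_sum_through_add_mem hbelow habove hr0 hb hx (by omega) hB (habove _ ?_ ?_)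
  all_goals
    have h1 : w₀ * r ≤ Q * r := Nat.mul_le_mul_right r hw₀Q
    have h2 : (S + 2) * lam = (S + 1) * lam + lam := by ring
    have h3 : (Q + 1) * r = Q * r + r := by ring
    have h4 : 0 < (S + 1) * lam := Nat.mul_pos S.succ_pos hlam
    omega

theorem mem_of_caseXVecC (hbelow : ∀ y, 1 ≤ y → y + r ≤ x → f y ∈ M)
    (habove : ∀ y, x < y → y ≤ x + D → f y ∈ M) (hlam : 0 < lam) (hr : (S + 2) * lam = r)
    (hD : Q * r + (S + 1) * lam = D) {b w₀ : ℕ} (hb : 1 ≤ b) (hw₀Q : w₀ ≤ Q)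
    (hx : b + w₀ * r = x) (hC : caseXVecC f (Q + 2) (S + 2) r lam b ∈ M) : f x ∈ M := by
  rw [caseXVecC, show Q + 2 - 2 = Q from rfl, show S + 2 - 1 = S + 1 from rfl,
    show Q + 2 - 1 = w₀ + (Q - w₀ + 1) by omega] at hC
  have hrw : (Q - w₀) * r ≤ Q * r := Nat.mul_le_mul_right r (Nat.sub_le Q w₀)
  have hr0 : 0 < r := by nlinarith
  refine mem_of_sum_through_add_mem hbelow habove hr0 hb hx (by omega) hC
    (M.sum_mem fun u hu => ?_)
  obtain ⟨hu1, huS⟩ := mem_Icc.mp hu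
  have h1 : w₀ * r ≤ Q * r := Nat.mul_le_mul_right r hw₀Q
  have h3 : u * lam ≤ (S + 1) * lam := Nat.mul_le_mul_right lam huS
  have h4 : lam ≤ u * lam := Nat.le_mul_of_pos_left lam hu1
  exact habove _ (by omega) (by omega)

theorem mem_of_caseX_of_le (hbelow : ∀ y, 1 ≤ y → y + r ≤ x → f y ∈ M)
    (habove : ∀ y, x < y → y ≤ x + D → f y ∈ M) (hlam : 0 < lam) (hr : (S + 2) * lam = r)
    (hD : Q * r + (S + 1) * lam = D)
    (hA : ∀ k, 1 ≤ k → k ≤ lam → caseXVecA f (Q + 2) (S + 2) r lam k ∈ M)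
    (hB : ∀ k, lam + 1 ≤ k → k ≤ r - lam → caseXVecB f (Q + 2) r lam k ∈ M)
    (hC : ∀ k, r - lam + 1 ≤ k → k ≤ r → caseXVecC f (Q + 2) (S + 2) r lam k ∈ M)
    (hx1 : 1 ≤ x) (hxK : x ≤ D + r) : f x ∈ M := by
  have hp : (S + 1) * lam + lam = r := by rw [← hr]; ring
  have hp0 : 0 < (S + 1) * lam := Nat.mul_pos S.succ_pos hlam
  by_cases hxl : x ≤ lam
  · exact mem_of_caseXVecA_of_caseXVecC habove hp0 hp hD (hA x hx1 hxl)
      (hC _ (by omega) (by omega))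
  obtain ⟨b, w₀, hb1, hbr, rfl⟩ := exists_eq_add_mul (by omega : 0 < r) hx1
  have hQr : (Q + 2) * r = Q * r + r + r := by ring
  have hw₀ : w₀ ≤ Q + 1 := by
    by_contra h
    have : (Q + 2) * r ≤ w₀ * r := Nat.mul_le_mul_right r (by omega)
    omega
  rcases le_or_gt b lam with hbl | hbl
  · have hw₀1 : 1 ≤ w₀ := by
      by_contra h
      simp [show w₀ = 0 by omega] at hxl
      omega
    exact mem_of_caseXVecA hbelow habove hlam hr hD hb1 hw₀1 hw₀ rfl (hA b hb1 hbl)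
  rcases le_or_gt b ((S + 1) * lam) with hbp | hbp
  · rcases hw₀.lt_or_eq with hw | rfl
    · exact mem_of_caseXVecB hbelow habove hlam hr hD hb1 (by omega) rfl
        (hB b (by omega) (by omega))
    have hSD : S * lam ≤ D := (Nat.mul_le_mul_right lam (by omega : S ≤ S + 1)).trans (by omega)
    exact mem_of_caseXVecA_of_caseXVecB hbelow habove hlam hSD hbl hbp rfl hA
      fun k h1 h2 => hB k h1 (by omega)
  · have hw₀Q : w₀ ≤ Q := by
      by_contra h
      have : (Q + 1) * r ≤ w₀ * r := Nat.mul_le_mul_right r (by omega)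
      have : (Q + 1) * r = Q * r + r := by ring
      omega
    exact mem_of_caseXVecC hbelow habove hlam hr hD hb1 hw₀Q rfl (hC b (by omega) hbr)

theorem mem_of_caseX {K q s : ℕ} (hf : Function.Periodic f K) (hlam : 0 < lam)
    (hr : s * lam = r) (hK : q * r = K + lam) (hDr : D + r = K) (hq : 2 ≤ q) (hs : 2 ≤ s)
    (hA : ∀ k, 1 ≤ k → k ≤ lam → caseXVecA f q s r lam k ∈ M)
    (hB : ∀ k, lam + 1 ≤ k → k ≤ r - lam → caseXVecB f q r lam k ∈ M)
    (hC : ∀ k, r - lam + 1 ≤ k → k ≤ r → caseXVecC f q s r lam k ∈ M)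
    (hx : ∀ δ, 1 ≤ δ → δ ≤ D → f (x + δ) ∈ M) : f x ∈ M := by
  obtain ⟨Q, rfl⟩ : ∃ Q, q = Q + 2 := ⟨q - 2, by omega⟩
  obtain ⟨S, rfl⟩ : ∃ S, s = S + 2 := ⟨s - 2, by omega⟩
  have hK0 : 0 < K := by nlinarith
  obtain ⟨b, w, hb1, hbK, hxb⟩ := exists_eq_add_mul hK0 (by omega : 1 ≤ x + K)
  have hshift : ∀ δ, f (b + δ) = f (x + δ) := fun δ => by
    have hw : f (b + δ + w * K) = f (b + δ) := by simpa using (hf.nat_mul w) (b + δ)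
    rw [← hw, ← hf (x + δ)]
    congr 1
    omega
  have hD : Q * r + (S + 1) * lam = D := by
    have : (Q + 2) * r = Q * r + r + r := by ring
    have : (S + 2) * lam = (S + 1) * lam + lam := by ring
    omega
  rw [← add_zero x, ← hshift, add_zero]
  refine mem_of_caseX_of_le (fun y hy1 hyb => ?_) (fun y hby hyD => ?_) hlam hr hD hA hB hC hb1
    (by omega)
  · rw [← hf y, show y + K = b + (y + K - b) by omega, hshift]
    exact hx _ (by omega) (by omega)
  · rw [show y = b + (y - b) by omega, hshift]
    exact hx _ (by omega) (by omega)

end Decoding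

theorem IsIndexCode.card_le_ncard {n : ℕ} {A : ZMod n → Set (ZMod n)} {C : Set (ZMod n → ZMod 2)}
    (hC : IsIndexCode n A C) (T : Finset (ZMod n)) (rank : ZMod n → ℕ)
    (hrank : ∀ k ∈ T, ∀ j ∈ A k, j ∈ T → rank j < rank k) : T.card ≤ C.ncard := by
  classical
  let π : (ZMod n → ZMod 2) →ₗ[ZMod 2] (T → ZMod 2) :=
    LinearMap.funLeft (ZMod 2) (ZMod 2) Subtype.val
  have hπ : ∀ j, π (stdVec n j) = if h : j ∈ T then Pi.single ⟨j, h⟩ 1 else 0 := by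
    intro j
    ext ⟨i, hi⟩
    split_ifs with h
    · simp [π, stdVec, Pi.single_apply]
    · simp only [π, LinearMap.funLeft_apply, stdVec, Pi.zero_apply]
      exact if_neg fun hij : i = j => h (hij ▸ hi)
  set W := Submodule.span (ZMod 2) (π '' C)
  have hsingle : ∀ N k (hk : k ∈ T), rank k < N → Pi.single ⟨k, hk⟩ (1 : ZMod 2) ∈ W := by
    intro N
    induction N with
    | zero => intro k hk h; omega
    | succ N ih =>
      intro k hk hkN
      have h := Submodule.mem_map_of_mem (f := π) (hC.2 k)
      rw [Submodule.map_span, hπ, dif_pos hk] at h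
      refine Submodule.span_le.mpr ?_ h
      rintro _ ⟨v, hv | ⟨j, hj, rfl⟩, rfl⟩
      · exact Submodule.subset_span ⟨v, hv, rfl⟩
      · rw [hπ]
        split_ifs with hjT
        · exact ih j hjT (by have := hrank k hk j hj hjT; omega)
        · exact W.zero_mem
  have htop : W = ⊤ := by
    rw [eq_top_iff, ← (Pi.basisFun (ZMod 2) T).span_eq, Submodule.span_le]
    rintro _ ⟨⟨k, hk⟩, rfl⟩
    rw [Pi.basisFun_apply]
    exact hsingle _ k hk (Nat.lt_succ_self _)
  have := (hC.1.image π).fintype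
  calc T.card = Module.finrank (ZMod 2) (T → ZMod 2) := by simp
    _ = Module.finrank (ZMod 2) W := by rw [htop, finrank_top]
    _ ≤ (π '' C).ncard := (finrank_span_le_card _).trans (Set.ncard_eq_toFinset_card' _).ge
    _ ≤ C.ncard := Set.ncard_image_le hC.1

theorem IsIndexCode.le_ncard_of_consecLiftedA {K D m : ℕ} (hm : 0 < m)
    {C : Set (ZMod (m * K) → ZMod 2)} (hC : IsIndexCode (m * K) (consecLiftedA K D m) C) :
    K - D ≤ C.ncard := by
  have hlt : ∀ a i, a < K → i ≤ m - 1 → a + i * K < m * K := fun a i ha hi => by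
    have : (i + 1) * K ≤ m * K := Nat.mul_le_mul_right K (by omega)
    have : (i + 1) * K = i * K + K := by ring
    omega
  have hcast : ∀ a b, a < m * K → b < m * K → ((a : ℕ) : ZMod (m * K)) = b → a = b := by
    intro a b ha hb h
    simpa [ZMod.val_natCast_of_lt ha, ZMod.val_natCast_of_lt hb] using congrArg ZMod.val h
  let T := (range (K - D)).image (Nat.cast : ℕ → ZMod (m * K))
  have hlt0 : ∀ c, c < K - D → c < m * K := fun c hc =>
    (hlt c 0 (by omega) (by omega)).trans_eq' (by ring)
  have hT : T.card = K - D := by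
    rw [card_image_of_injOn fun a ha b hb h =>
      hcast a b (hlt0 a (mem_range.mp ha)) (hlt0 b (mem_range.mp hb)) h, card_range]
  rw [← hT]
  refine hC.card_le_ncard T (fun j => K - j.val) ?_
  rintro _ hk _ hj hjT
  obtain ⟨a, ha, rfl⟩ := mem_image.mp hk
  obtain ⟨b, hb, rfl⟩ := mem_image.mp hjT
  rw [mem_range] at ha hb
  have hab : a < b := by
    rcases hj with ⟨i, hi1, hi, h⟩ | ⟨δ, i, hδ1, hδ, hi, h⟩
    · rw [← Nat.cast_add] at h
      have := hcast _ _ (hlt0 b hb) (hlt a i (by omega) hi) h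
      have : K ≤ i * K := Nat.le_mul_of_pos_left K hi1
      omega
    · rw [← Nat.cast_add] at h
      have := hcast _ _ (hlt0 b hb)
        (by rw [← add_assoc]; exact hlt (a + δ) i (by omega) hi) h
      omega
  simp only [ZMod.val_natCast_of_lt (hlt0 a ha), ZMod.val_natCast_of_lt (hlt0 b hb)]
  omega

theorem eSum_periodic (K m : ℕ) : Function.Periodic (eSum K m) K := by
  intro l
  let g : ℕ → ZMod (m * K) → ZMod 2 := fun t => stdVec (m * K) ((l + t * K : ℕ))
  have hg : g m = g 0 := by
    simp only [g, Nat.cast_add, ZMod.natCast_self, zero_mul, add_zero, Nat.cast_zero]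
  have h := sum_range_succ' g m
  rw [sum_range_succ, hg] at h
  calc eSum K m (l + K) = ∑ t ∈ range m, g (t + 1) := by
        refine sum_congr rfl fun t _ => ?_
        simp only [g]
        congr 2
        ring
    _ = eSum K m l := add_right_cancel h.symm

theorem stdVec_mem_span_codeCaseX {K D lam m : ℕ} (hlam : 0 < lam) (hm : 0 < m) (hDK : D < K)
    (hdvd1 : lam ∣ (K - D)) (hdvd2 : (K - D) ∣ (K + lam))
    (hq : 2 ≤ (K + lam) / (K - D)) (hs : 2 ≤ (K - D) / lam) (k : ZMod (m * K)) :
    stdVec (m * K) k ∈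
      Submodule.span (ZMod 2) (codeCaseX K D lam m ∪ stdVec (m * K) '' consecLiftedA K D m k) := by
  have : NeZero (m * K) := ⟨(Nat.mul_pos hm (by omega)).ne'⟩
  set N := Submodule.span (ZMod 2) (codeCaseX K D lam m ∪ stdVec (m * K) '' consecLiftedA K D m k)
  have hanti : ∀ x ∈ consecLiftedA K D m k, stdVec (m * K) x ∈ N :=
    fun x hx => Submodule.subset_span (Or.inr ⟨x, hx, rfl⟩)
  have hcode : ∀ v ∈ codeCaseX K D lam m, v ∈ N := fun v hv => Submodule.subset_span (Or.inl hv)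
  have hk : ((k.val : ℕ) : ZMod (m * K)) = k := ZMod.natCast_zmod_val k
  have hself : eSum K m k.val ∈ N :=
    mem_of_caseX (M := N.toAddSubgroup) (eSum_periodic K m) hlam (Nat.div_mul_cancel hdvd1)
      (Nat.div_mul_cancel hdvd2) (by omega) hq hs
      (fun j h1 h2 => hcode _ (Or.inl (Or.inl ⟨j, h1, h2, rfl⟩)))
      (fun j h1 h2 => hcode _ (Or.inl (Or.inr ⟨j, h1, h2, rfl⟩)))
      (fun j h1 h2 => hcode _ (Or.inr ⟨j, h1, h2, rfl⟩))
      fun δ h1 h2 => N.sum_mem fun t ht => hanti _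
        (Or.inr ⟨δ, t, h1, h2, by simp at ht; omega, by rw [add_assoc, Nat.cast_add, hk]⟩)
  obtain ⟨m, rfl⟩ : ∃ m', m = m' + 1 := ⟨m - 1, by omega⟩
  have hcopies : ∑ t ∈ range m, stdVec ((m + 1) * K) ((k.val + (t + 1) * K : ℕ)) ∈ N :=
    N.sum_mem fun t ht => hanti _
      (Or.inl ⟨t + 1, by omega, by simp at ht; omega, by rw [Nat.cast_add, hk]⟩)
  rw [eSum, sum_range_succ', zero_mul, add_zero, hk] at hself
  exact (N.add_mem_iff_right hcopies).mp hself

theorem setOf_exists_Icc_eq_image {α : Type*} (g : ℕ → α) (a b : ℕ) :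
    {v | ∃ k, a ≤ k ∧ k ≤ b ∧ v = g k} = g '' Set.Icc a b := by
  ext v
  simp [eq_comm, and_assoc]

theorem codeCaseX_eq (K D lam m : ℕ) : codeCaseX K D lam m =
    caseXVecA (eSum K m) ((K + lam) / (K - D)) ((K - D) / lam) (K - D) lam '' Set.Icc 1 lam ∪
      caseXVecB (eSum K m) ((K + lam) / (K - D)) (K - D) lam '' Set.Icc (lam + 1) (K - D - lam) ∪
      caseXVecC (eSum K m) ((K + lam) / (K - D)) ((K - D) / lam) (K - D) lam ''
        Set.Icc (K - D - lam + 1) (K - D) := by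
  simp only [codeCaseX, ← setOf_exists_Icc_eq_image]
  rfl

theorem ncard_image_Icc_union_le {α : Type*} (gA gB gC : ℕ → α) {r lam : ℕ} (h : 2 * lam ≤ r) :
    (gA '' Set.Icc 1 lam ∪ gB '' Set.Icc (lam + 1) (r - lam) ∪
      gC '' Set.Icc (r - lam + 1) r).ncard ≤ r := by
  have hI : ∀ (g : ℕ → α) a b, (g '' Set.Icc a b).ncard ≤ b + 1 - a :=
    fun g a b => (Set.ncard_image_le (Set.finite_Icc a b)).trans (Set.ncard_Icc_nat a b).le
  have := Set.ncard_union_le (gA '' Set.Icc 1 lam) (gB '' Set.Icc (lam + 1) (r - lam))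
  have := Set.ncard_union_le (gA '' Set.Icc 1 lam ∪ gB '' Set.Icc (lam + 1) (r - lam))
    (gC '' Set.Icc (r - lam + 1) r)
  have := hI gA 1 lam
  have := hI gB (lam + 1) (r - lam)
  have := hI gC (r - lam + 1) r
  omega

theorem ncard_codeCaseX_le {K D lam : ℕ} (m : ℕ) (h : 2 * lam ≤ K - D) :
    (codeCaseX K D lam m).ncard ≤ K - D := by
  rw [codeCaseX_eq]
  exact ncard_image_Icc_union_le _ _ _ h

theorem codeCaseX_finite (K D lam m : ℕ) : (codeCaseX K D lam m).Finite := by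
  rw [codeCaseX_eq]
  exact (((Set.finite_Icc _ _).image _).union ((Set.finite_Icc _ _).image _)).union
    ((Set.finite_Icc _ _).image _)

theorem lifted_code_caseX_general (K D lam m : ℕ) (hlam : 0 < lam)
    (hm : 0 < m) (hDK : D < K) (hdvd1 : lam ∣ (K - D)) (hdvd2 : (K - D) ∣ (K + lam))
    (hq : 2 ≤ (K + lam) / (K - D)) (hs : 2 ≤ (K - D) / lam) :
    (IsIndexCode (m * K) (consecLiftedA K D m) (codeCaseX K D lam m) ∧
      (codeCaseX K D lam m).ncard = K - D) ∧
    (∀ C' : Set (ZMod (m * K) → ZMod 2),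
      IsIndexCode (m * K) (consecLiftedA K D m) C' → K - D ≤ C'.ncard) := by
  have hcode : IsIndexCode (m * K) (consecLiftedA K D m) (codeCaseX K D lam m) :=
    ⟨codeCaseX_finite K D lam m, stdVec_mem_span_codeCaseX hlam hm hDK hdvd1 hdvd2 hq hs⟩
  have hlower : ∀ C' : Set (ZMod (m * K) → ZMod 2),
      IsIndexCode (m * K) (consecLiftedA K D m) C' → K - D ≤ C'.ncard :=
    fun _ hC' => hC'.le_ncard_of_consecLiftedA hm
  have hlen := ncard_codeCaseX_le m ((Nat.le_div_iff_mul_le hlam).mp hs)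
  exact ⟨⟨hcode, hlen.antisymm (hlower _ hcode)⟩, hlower⟩

/-- **Corollary 3 (lift of Case X).** If `λ ∣ K - D`, `K - D ∣ K + λ`,
`q = (K + λ)/(K - D) ≥ 2` and `s = (K - D)/λ ≥ 2`, then the lifted code is a valid
scalar linear index code of optimal length `K - D` for the lifted consecutive-antidote
problem on `m*K` messages. -/
theorem lifted_code_caseX (K D lam m : ℕ) (hK : 0 < K) (hD : 0 < D) (hlam : 0 < lam)
    (hm : 0 < m) (hDK : D < K) (hdvd1 : lam ∣ (K - D)) (hdvd2 : (K - D) ∣ (K + lam))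
    (hq : 2 ≤ (K + lam) / (K - D)) (hs : 2 ≤ (K - D) / lam) :
    (IsIndexCode (m * K) (consecLiftedA K D m) (codeCaseX K D lam m) ∧
      (codeCaseX K D lam m).ncard = K - D) ∧
    (∀ C' : Set (ZMod (m * K) → ZMod 2),
      IsIndexCode (m * K) (consecLiftedA K D m) C' → K - D ≤ C'.ncard) :=
  lifted_code_caseX_general K D lam m hlam hm hDK hdvd1 hdvd2 hq hs
end
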